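/- arXiv:2306.16091 — 2 statements merged into one kernel-verified Lean document; each statement's English description precedes it below -/
import Mathlib

section
/- Let H : [0,1] → (0,1) be Lipschitz continuous with H̲ = min_{t ∈ [0,1]} H_t, and let D : [0,1] → ℝ be measurable with 0 < D̲ ≤ D(t) ≤ D̄ < ∞ for all t. Define I(h) = ∫₀¹ D(t) h^{2H_t} dt for h ∈ (0,1). Then I(h) ≤ D̄ h^{2H̲} for every h ∈ (0,1), and there exist a constant C̲ > 0 and h₀ ∈ (0,1) such that I(h) ≥ C̲ h^{2H̲} / log(1/h) for every h ∈ (0, h₀]. -/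
open MeasureTheory Set Real

/-!
For `h < 1` the map `x ↦ h ^ x` is decreasing, so `h ^ (2 H_t) ≤ h ^ (2 H̲)` gives the upper bound.
For the lower bound, let `t₀` be a minimiser of `H` and `L = log (1 / h)`. On an interval of length
`δ ≍ 1 / L` next to `t₀`, the Lipschitz bound gives `2 H_t ≤ 2 H̲ + 1 / L`, and `h ^ (1 / L) = e⁻¹`,
so the integrand is at least `D̲ e⁻¹ h ^ (2 H̲)` there; integrating over that interval only
costs the factor `δ`, which is the `1 / log (1 / h)` loss.
-/

lemma rpow_inv_log_one_div {h : ℝ} (h0 : 0 < h) (h1 : h < 1) :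
    h ^ (log (1 / h))⁻¹ = exp (-1) := by
  rw [one_div, log_inv, inv_neg, rpow_neg h0.le, rpow_inv_log h0 h1.ne, exp_neg]

lemma mul_rpow_le_mul_rpow {d dhi h x y : ℝ} (hd0 : 0 ≤ d) (hd : d ≤ dhi) (h0 : 0 < h)
    (h1 : h ≤ 1) (hxy : y ≤ x) : d * h ^ x ≤ dhi * h ^ y :=
  mul_le_mul hd (rpow_le_rpow_of_exponent_ge h0 h1 hxy) (rpow_nonneg h0.le _) (hd0.trans hd)

lemma mul_rpow_le_mul_rpow_of_le_add_inv_log {d dlo h x y : ℝ} (hdlo : 0 ≤ dlo) (hd : dlo ≤ d)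
    (h0 : 0 < h) (h1 : h < 1) (hxy : x ≤ y + (log (1 / h))⁻¹) :
    dlo * exp (-1) * h ^ y ≤ d * h ^ x := by
  have hpow : h ^ y * exp (-1) ≤ h ^ x := by
    rw [← rpow_inv_log_one_div h0 h1, ← rpow_add h0]
    exact rpow_le_rpow_of_exponent_ge h0 h1.le hxy
  calc dlo * exp (-1) * h ^ y = dlo * (h ^ y * exp (-1)) := by ring
    _ ≤ d * h ^ x := mul_le_mul hd hpow (by positivity) (hdlo.trans hd)

lemma exists_Icc_subset_unitInterval_dist_le {t₀ δ : ℝ} (ht₀ : t₀ ∈ Icc (0 : ℝ) 1)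
    (hδ0 : 0 ≤ δ) (hδ1 : δ ≤ 1) :
    ∃ a, Icc a (a + δ) ⊆ Icc (0 : ℝ) 1 ∧ ∀ t ∈ Icc a (a + δ), dist t t₀ ≤ δ := by
  refine ⟨min t₀ (1 - δ), fun t ht => ⟨?_, ?_⟩, fun t ht => ?_⟩
  · exact le_trans (le_min ht₀.1 (by linarith)) ht.1
  · exact ht.2.trans (by linarith [min_le_right t₀ (1 - δ)])
  · rw [dist_eq, abs_le]
    constructor <;> cases min_choice t₀ (1 - δ) <;> grind

lemma mul_le_setIntegral_of_Icc_subset {f : ℝ → ℝ} {s : Set ℝ} {a δ c : ℝ}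
    (hf : IntegrableOn f s) (hs : MeasurableSet s) (hf0 : ∀ t ∈ s, 0 ≤ f t)
    (hJ : Icc a (a + δ) ⊆ s) (hδ : 0 ≤ δ) (hc : ∀ t ∈ Icc a (a + δ), c ≤ f t) :
    c * δ ≤ ∫ t in s, f t :=
  calc c * δ = c * volume.real (Icc a (a + δ)) := by
        rw [volume_real_Icc, add_sub_cancel_left, max_eq_left hδ]
    _ ≤ ∫ t in Icc a (a + δ), f t :=
        setIntegral_ge_of_const_le_real measurableSet_Icc measure_Icc_lt_top.ne hc
          (hf.mono_set hJ)
    _ ≤ ∫ t in s, f t :=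
        setIntegral_mono_set hf ((ae_restrict_mem hs).mono hf0) hJ.eventuallyLE

section Integrand

variable {D H : ℝ → ℝ} {s : Set ℝ} {h Dlo Dhi Hlo : ℝ}

lemma integrableOn_mul_rpow (hD : Measurable D) (hH : ContinuousOn H s) (hs : MeasurableSet s)
    (hs_fin : volume s < ⊤) (h0 : 0 < h) (h1 : h ≤ 1)
    (hDb : ∀ t ∈ s, 0 ≤ D t ∧ D t ≤ Dhi) (hHlo : ∀ t ∈ s, Hlo ≤ H t) :
    IntegrableOn (fun t => D t * h ^ (2 * H t)) s := by
  have hmeas : AEStronglyMeasurable (fun t => D t * h ^ (2 * H t)) (volume.restrict s) :=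
    hD.aestronglyMeasurable.mul <|
      ((continuous_const_rpow h0.ne').comp_continuousOn
        (continuousOn_const.mul hH)).aestronglyMeasurable hs
  refine IntegrableOn.of_bound hs_fin hmeas (Dhi * h ^ (2 * Hlo)) ?_
  filter_upwards [ae_restrict_mem hs] with t ht
  rw [norm_of_nonneg (mul_nonneg (hDb t ht).1 (rpow_nonneg h0.le _))]
  exact mul_rpow_le_mul_rpow (hDb t ht).1 (hDb t ht).2 h0 h1 (by linarith [hHlo t ht])

lemma setIntegral_mul_rpow_le (hD : Measurable D) (hH : ContinuousOn H s)
    (hs : MeasurableSet s) (hs_fin : volume s < ⊤) (h0 : 0 < h) (h1 : h ≤ 1)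
    (hDb : ∀ t ∈ s, 0 ≤ D t ∧ D t ≤ Dhi) (hHlo : ∀ t ∈ s, Hlo ≤ H t) :
    ∫ t in s, D t * h ^ (2 * H t) ≤ volume.real s * (Dhi * h ^ (2 * Hlo)) := by
  rw [← smul_eq_mul, ← setIntegral_const]
  refine setIntegral_mono_on (integrableOn_mul_rpow hD hH hs hs_fin h0 h1 hDb hHlo)
    (integrableOn_const hs_fin.ne) hs fun t ht => ?_
  exact mul_rpow_le_mul_rpow (hDb t ht).1 (hDb t ht).2 h0 h1 (by linarith [hHlo t ht])

lemma le_setIntegral_unitInterval_mul_rpow {κ : NNReal} {t₀ : ℝ} (hD : Measurable D)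
    (hH : LipschitzOnWith κ H (Icc 0 1)) (ht₀ : t₀ ∈ Icc (0 : ℝ) 1)
    (hHlo : ∀ t ∈ Icc (0 : ℝ) 1, H t₀ ≤ H t) (hDlo : 0 ≤ Dlo)
    (hDb : ∀ t ∈ Icc (0 : ℝ) 1, Dlo ≤ D t ∧ D t ≤ Dhi) (h0 : 0 < h) (hh : h ≤ exp (-1)) :
    Dlo * exp (-1) / (2 * (κ + 1)) * h ^ (2 * H t₀) / log (1 / h) ≤
      ∫ t in Icc (0 : ℝ) 1, D t * h ^ (2 * H t) := by
  -- `κ + 1` rather than `κ`, so that `δ > 0` also when `κ = 0`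
  set K : ℝ := κ + 1
  set L := log (1 / h)
  set δ := (2 * K * L)⁻¹
  have h1 : h < 1 := hh.trans_lt (exp_lt_one_iff.mpr (by norm_num))
  have hK : 1 ≤ K := le_add_of_nonneg_left κ.coe_nonneg
  have hL : 1 ≤ L := by
    have := log_le_log h0 hh
    rw [log_exp] at this
    simp only [L, one_div, log_inv]
    linarith
  have hδ0 : 0 < δ := by positivity
  have hδ1 : δ ≤ 1 := inv_le_one_of_one_le₀ (by nlinarith)
  have hDb' : ∀ t ∈ Icc (0 : ℝ) 1, 0 ≤ D t ∧ D t ≤ Dhi :=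
    fun t ht => ⟨hDlo.trans (hDb t ht).1, (hDb t ht).2⟩
  have hint := integrableOn_mul_rpow hD hH.continuousOn measurableSet_Icc
    measure_Icc_lt_top h0 h1.le hDb' hHlo
  obtain ⟨a, hJ, hdist⟩ := exists_Icc_subset_unitInterval_dist_le ht₀ hδ0.le hδ1
  have hexp : ∀ t ∈ Icc a (a + δ), 2 * H t ≤ 2 * H t₀ + L⁻¹ := by
    intro t ht
    have hlip : dist (H t) (H t₀) ≤ κ * δ :=
      (hH.dist_le_mul t (hJ ht) t₀ ht₀).trans (by gcongr; exact hdist t ht)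
    have hKδ : 2 * K * δ = L⁻¹ := by simp only [δ]; field_simp
    rw [dist_eq, abs_le] at hlip
    nlinarith [hlip.2]
  calc Dlo * exp (-1) / (2 * K) * h ^ (2 * H t₀) / L
      = Dlo * exp (-1) * h ^ (2 * H t₀) * δ := by simp only [δ]; field_simp
    _ ≤ _ := mul_le_setIntegral_of_Icc_subset hint measurableSet_Icc
      (fun t ht => mul_nonneg (hDb' t ht).1 (rpow_nonneg h0.le _)) hJ hδ0.le
      fun t ht => mul_rpow_le_mul_rpow_of_le_add_inv_log hDlo (hDb t (hJ ht)).1 h0 h1 (hexp t ht)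

end Integrand

theorem stmt2_general (H D : ℝ → ℝ) (κ : NNReal)
    (hHlip : LipschitzOnWith κ H (Icc (0:ℝ) 1))
    (Hlo : ℝ) (hHlo : ∀ t ∈ Icc (0:ℝ) 1, Hlo ≤ H t)
    (hHloAtt : ∃ t ∈ Icc (0:ℝ) 1, H t = Hlo)
    (hDmeas : Measurable D) (Dlo Dhi : ℝ) (hDlo : 0 < Dlo)
    (hDb : ∀ t ∈ Icc (0:ℝ) 1, Dlo ≤ D t ∧ D t ≤ Dhi) :
    (∀ h ∈ Ioo (0:ℝ) 1,
      (∫ t in Icc (0:ℝ) 1, D t * h ^ (2 * H t)) ≤ Dhi * h ^ (2 * Hlo)) ∧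
    (∃ C > (0:ℝ), ∃ h₀ ∈ Ioo (0:ℝ) 1, ∀ h ∈ Ioc (0:ℝ) h₀,
      C * h ^ (2 * Hlo) / Real.log (1 / h) ≤
        ∫ t in Icc (0:ℝ) 1, D t * h ^ (2 * H t)) := by
  obtain ⟨t₀, ht₀, rfl⟩ := hHloAtt
  have hDb' : ∀ t ∈ Icc (0 : ℝ) 1, 0 ≤ D t ∧ D t ≤ Dhi :=
    fun t ht => ⟨hDlo.le.trans (hDb t ht).1, (hDb t ht).2⟩
  refine ⟨fun h hh => ?_, Dlo * exp (-1) / (2 * (κ + 1)), by positivity, exp (-1),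
    ⟨exp_pos _, exp_lt_one_iff.mpr (by norm_num)⟩, fun h hh => ?_⟩
  · simpa using setIntegral_mul_rpow_le hDmeas hHlip.continuousOn measurableSet_Icc
      measure_Icc_lt_top hh.1 hh.2.le hDb' hHlo
  · exact le_setIntegral_unitInterval_mul_rpow hDmeas hHlip ht₀ hHlo hDlo.le hDb hh.1 hh.2

/-- bounds on `I(h) = ∫₀¹ D(t) h^{2H_t} dt` for a Lipschitz exponent
function `H : [0,1] → (0,1)` attaining its minimum `Hlo`, and a measurable
function `D` bounded between `Dlo > 0` and `Dhi`. -/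
theorem stmt2 (H D : ℝ → ℝ) (κ : NNReal)
    (hHlip : LipschitzOnWith κ H (Icc (0:ℝ) 1))
    (hH01 : ∀ t ∈ Icc (0:ℝ) 1, 0 < H t ∧ H t < 1)
    (Hlo : ℝ) (hHlo : ∀ t ∈ Icc (0:ℝ) 1, Hlo ≤ H t)
    (hHloAtt : ∃ t ∈ Icc (0:ℝ) 1, H t = Hlo)
    (hDmeas : Measurable D) (Dlo Dhi : ℝ) (hDlo : 0 < Dlo)
    (hDb : ∀ t ∈ Icc (0:ℝ) 1, Dlo ≤ D t ∧ D t ≤ Dhi) :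
    (∀ h ∈ Ioo (0:ℝ) 1,
      (∫ t in Icc (0:ℝ) 1, D t * h ^ (2 * H t)) ≤ Dhi * h ^ (2 * Hlo)) ∧
    (∃ C > (0:ℝ), ∃ h₀ ∈ Ioo (0:ℝ) 1, ∀ h ∈ Ioc (0:ℝ) h₀,
      C * h ^ (2 * Hlo) / Real.log (1 / h) ≤
        ∫ t in Icc (0:ℝ) 1, D t * h ^ (2 * H t)) :=
  stmt2_general H D κ hHlip Hlo hHlo hHloAtt hDmeas Dlo Dhi hDlo hDb
end

section
/- Under the independent-design assumptions, there exist constants 0 < b̲ ≤ b̄ < ∞, depending only on C_{f,L}, C_{f,U} and C_𝔪, such that for every N ≥ 1, every m ≥ 1, every h ∈ (0,1] and every t ∈ [0,1]: b̲ · N · min{1, m h} ≤ E[𝒲_N(t;h)] ≤ b̄ · N · min{1, m h}. -/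
/-!
A unit `i` misses `[t - h, t + h]` exactly when all of its `M_i` independent sampling points do,
so `E[w_i(t;h)] = 1 - (1 - p)^{M_i}`, where `p` is the probability that one point lands there.
The density bounds give `C_{f,L} h ≤ p ≤ 2 C_{f,U} h`, and `1 - (1 - p)^K` lies between
`min(1, K p) / 2` and `min(1, K p)`. Since `M_i` is comparable to `m`, every `E[w_i(t;h)]` is
comparable to `min(1, m h)`, and summing over the `N` units gives the bounds.
-/

open MeasureTheory Set

open Classical in
/-- Selection indicator `w_i(t;h)`: equals `1` if at least one of the
sampling points `T_1^{(i)}, …, T_{M_i}^{(i)}` lies within distance `h` of `t`. -/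
noncomputable def wInd {Ω : Type} (M : ℕ → ℕ) (T : ℕ → ℕ → Ω → ℝ)
    (i : ℕ) (t h : ℝ) (ω : Ω) : ℝ :=
  if ∃ m < M i, |T i m ω - t| ≤ h then 1 else 0

/-- `𝒲_N(t;h) = Σ_{i<N} w_i(t;h)`. -/
noncomputable def WNone {Ω : Type} (M : ℕ → ℕ) (T : ℕ → ℕ → Ω → ℝ)
    (N : ℕ) (t h : ℝ) (ω : Ω) : ℝ :=
  ∑ i ∈ Finset.range N, wInd M T i t h ω

/-- `𝒲_N(s,t;h) = Σ_{i<N} w_i(s;h) w_i(t;h)`. -/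
noncomputable def WNtwo {Ω : Type} (M : ℕ → ℕ) (T : ℕ → ℕ → Ω → ℝ)
    (N : ℕ) (s t h : ℝ) (ω : Ω) : ℝ :=
  ∑ i ∈ Finset.range N, wInd M T i s h ω * wInd M T i t h ω

/-- The independent-design assumptions: the numbers of points `M_i` are
comparable to `m` up to the factor `C𝔪`, and the sampling points `T_m^{(i)}`,
`m < M_i`, `i < N`, are independent random variables with common density `f`
supported in `[0,1]` and bounded between `CfL` and `CfU`. -/
def IndepDesign (Ω : Type) [MeasureSpace Ω] (f : ℝ → ℝ) (M : ℕ → ℕ)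
    (T : ℕ → ℕ → Ω → ℝ) (N m : ℕ) (CfL CfU C𝔪 : ℝ) : Prop :=
  IsProbabilityMeasure (volume : Measure Ω) ∧
  (∀ i < N, 0 < M i) ∧
  (∀ i < N, (m : ℝ) / C𝔪 ≤ (M i : ℝ) ∧ (M i : ℝ) ≤ C𝔪 * m) ∧
  Measurable f ∧
  (∀ t ∈ Icc (0:ℝ) 1, CfL ≤ f t ∧ f t ≤ CfU) ∧
  (∀ t, t ∉ Icc (0:ℝ) 1 → f t = 0) ∧
  (∀ i mm, Measurable (T i mm)) ∧
  (∀ i < N, ∀ mm < M i,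
    Measure.map (T i mm) volume =
      MeasureTheory.volume.withDensity (fun t => ENNReal.ofReal (f t))) ∧
  ProbabilityTheory.iIndepFun
    (fun p : {q : ℕ × ℕ // q.1 < N ∧ q.2 < M q.1} => T p.1.1 p.1.2) volume

open ProbabilityTheory Metric

lemma measureReal_iUnion_preimage_eq_one_sub_pow {Ω ι α : Type*} [Fintype ι]
    {_ : MeasurableSpace Ω} {μ : Measure Ω} [IsProbabilityMeasure μ] [MeasurableSpace α]
    {X : ι → Ω → α} (hX : iIndepFun X μ) (hXm : ∀ i, Measurable (X i))
    {S : Set α} (hS : MeasurableSet S) {p : ℝ} (hp : ∀ i, μ.real (X i ⁻¹' S) = p) :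
    μ.real (⋃ i, X i ⁻¹' S) = 1 - (1 - p) ^ Fintype.card ι := by
  have hcompl : (⋃ i, X i ⁻¹' S)ᶜ = ⋂ i ∈ Finset.univ, X i ⁻¹' Sᶜ := by simp [compl_iUnion]
  rw [← compl_compl (⋃ i, X i ⁻¹' S),
    probReal_compl_eq_one_sub (MeasurableSet.iUnion fun i => hXm i hS).compl, hcompl,
    measureReal_def, hX.measure_inter_preimage_eq_mul _ fun _ _ => hS.compl, ENNReal.toReal_prod]
  simp_rw [← measureReal_def, preimage_compl, probReal_compl_eq_one_sub (hXm _ hS), hp,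
    Finset.prod_const, Finset.card_univ]

lemma one_sub_one_sub_pow_le_min_one_mul {p : ℝ} (hp1 : p ≤ 1) (K : ℕ) :
    1 - (1 - p) ^ K ≤ min 1 (K * p) := by
  refine le_min (by linarith [pow_nonneg (sub_nonneg.2 hp1) K]) ?_
  have bernoulli := one_add_mul_le_pow (by linarith : (-2:ℝ) ≤ -p) K
  rw [← sub_eq_add_neg] at bernoulli
  linarith

/- `(1 + K p) (1 - p)^K ≤ (1 + p)^K (1 - p)^K = (1 - p^2)^K ≤ 1`, so the miss probability
`(1 - p)^K` is at most `1 / (1 + K p)`. -/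
lemma half_min_one_mul_le_one_sub_one_sub_pow {p : ℝ} (hp0 : 0 ≤ p) (hp1 : p ≤ 1) (K : ℕ) :
    1 / 2 * min 1 (K * p) ≤ 1 - (1 - p) ^ K := by
  have hq0 : 0 ≤ (1 - p) ^ K := pow_nonneg (sub_nonneg.2 hp1) K
  have hmiss : (1 + K * p) * (1 - p) ^ K ≤ 1 :=
    calc (1 + K * p) * (1 - p) ^ K ≤ (1 + p) ^ K * (1 - p) ^ K := by
          gcongr; exact one_add_mul_le_pow (by linarith) K
      _ = (1 - p ^ 2) ^ K := by rw [← mul_pow]; ring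
      _ ≤ 1 := pow_le_one₀ (by nlinarith) (by nlinarith)
  have hKp : 0 ≤ (K : ℝ) * p := by positivity
  rcases le_total ((K : ℝ) * p) 1 with h | h
  · rw [min_eq_right h]; nlinarith
  · rw [min_eq_left h]; nlinarith

lemma min_one_mul_min_one_le {c x : ℝ} (hc : 0 ≤ c) (hx : 0 ≤ x) :
    min 1 c * min 1 x ≤ min 1 (c * x) :=
  le_min (mul_le_one₀ (min_le_left 1 c) (le_min zero_le_one hx) (min_le_left 1 x))
    (mul_le_mul (min_le_right 1 c) (min_le_right 1 x) (le_min zero_le_one hx) hc)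

lemma min_one_mul_le_max_one_mul_min_one (c : ℝ) {x : ℝ} (hx : 0 ≤ x) :
    min 1 (c * x) ≤ max 1 c * min 1 x := by
  rcases le_total x 1 with h | h
  · rw [min_eq_right h]
    nlinarith [min_le_right 1 (c * x), le_max_right 1 c]
  · rw [min_eq_left h]
    nlinarith [min_le_left 1 (c * x), le_max_left 1 c]

lemma ofReal_mul_le_withDensity_closedBall {f : ℝ → ℝ} {c t h : ℝ} (hc : 0 ≤ c)
    (hf : ∀ x ∈ Icc (0:ℝ) 1, c ≤ f x) (ht : t ∈ Icc (0:ℝ) 1) (hh : h ∈ Icc (0:ℝ) 1) :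
    ENNReal.ofReal (c * h) ≤
      volume.withDensity (fun x => ENNReal.ofReal (f x)) (closedBall t h) := by
  set A := Icc (max (t - h) 0) (min (t + h) 1)
  have hA : A = closedBall t h ∩ Icc 0 1 := by rw [Real.closedBall_eq_Icc, Icc_inter_Icc]
  have hlen : h ≤ min (t + h) 1 - max (t - h) 0 := by
    rcases ht with ⟨ht0, ht1⟩
    rcases hh with ⟨hh0, hh1⟩
    rcases le_total (t - h) 0 with h1 | h1 <;> rcases le_total (t + h) 1 with h2 | h2 <;>
      simp only [max_eq_left, max_eq_right, min_eq_left, min_eq_right, h1, h2] <;> linarith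
  calc ENNReal.ofReal (c * h) ≤ ENNReal.ofReal c * volume A := by
        rw [Real.volume_Icc, ← ENNReal.ofReal_mul hc]; gcongr
    _ = ∫⁻ _ in A, ENNReal.ofReal c := (setLIntegral_const A _).symm
    _ ≤ ∫⁻ x in A, ENNReal.ofReal (f x) := setLIntegral_mono' measurableSet_Icc fun x hx =>
        ENNReal.ofReal_le_ofReal (hf x (hA ▸ hx).2)
    _ = volume.withDensity (fun x => ENNReal.ofReal (f x)) A :=
        (withDensity_apply _ measurableSet_Icc).symm
    _ ≤ _ := measure_mono (hA ▸ inter_subset_left)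

lemma withDensity_closedBall_le_ofReal {f : ℝ → ℝ} {C : ℝ} (hf : ∀ x, f x ≤ C) (t : ℝ)
    {h : ℝ} (hh : 0 ≤ h) :
    volume.withDensity (fun x => ENNReal.ofReal (f x)) (closedBall t h) ≤
      ENNReal.ofReal (C * (2 * h)) :=
  calc volume.withDensity (fun x => ENNReal.ofReal (f x)) (closedBall t h)
      = ∫⁻ x in closedBall t h, ENNReal.ofReal (f x) := withDensity_apply _ measurableSet_closedBall
    _ ≤ ∫⁻ _ in closedBall t h, ENNReal.ofReal C :=
        lintegral_mono fun x => ENNReal.ofReal_le_ofReal (hf x)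
    _ = ENNReal.ofReal (C * (2 * h)) := by
        rw [setLIntegral_const, Real.volume_closedBall, ← ENNReal.ofReal_mul' (by positivity)]

lemma wInd_eq_indicator {Ω : Type} (M : ℕ → ℕ) (T : ℕ → ℕ → Ω → ℝ) (i : ℕ) (t h : ℝ) :
    wInd M T i t h = (⋃ k : Fin (M i), T i k ⁻¹' closedBall t h).indicator 1 := by
  funext ω
  simp [wInd, Set.indicator, Real.dist_eq, Fin.exists_iff]

namespace IndepDesign

variable {Ω : Type} [MeasureSpace Ω] {f : ℝ → ℝ} {M : ℕ → ℕ} {T : ℕ → ℕ → Ω → ℝ} {N m : ℕ}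
  {CfL CfU C𝔪 : ℝ} {i : ℕ} {t h : ℝ}

lemma isProbabilityMeasure_withDensity (hd : IndepDesign Ω f M T N m CfL CfU C𝔪) (hi : i < N) :
    IsProbabilityMeasure (volume.withDensity fun x => ENNReal.ofReal (f x)) := by
  obtain ⟨hP, hM, -, -, -, -, hTm, hlaw, -⟩ := hd
  rw [← hlaw i hi 0 (hM i hi)]
  exact Measure.isProbabilityMeasure_map (hTm i 0).aemeasurable

lemma integral_wInd (hd : IndepDesign Ω f M T N m CfL CfU C𝔪) (hi : i < N) :
    ∫ ω, wInd M T i t h ω =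
      1 - (1 - (volume.withDensity fun x => ENNReal.ofReal (f x)).real (closedBall t h)) ^ M i := by
  obtain ⟨hP, -, -, -, -, -, hTm, hlaw, hindep⟩ := hd
  have hrow : iIndepFun (fun k : Fin (M i) => T i k) volume :=
    hindep.precomp
      (g := fun k : Fin (M i) => (⟨(i, k), hi, k.isLt⟩ : {q : ℕ × ℕ // q.1 < N ∧ q.2 < M q.1}))
      fun a b hab => Fin.ext (congrArg (fun q => q.1.2) hab)
  rw [wInd_eq_indicator, integral_indicator_one
      (MeasurableSet.iUnion fun k : Fin (M i) => hTm i k measurableSet_closedBall),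
    measureReal_iUnion_preimage_eq_one_sub_pow hrow (fun k => hTm i k) measurableSet_closedBall
      fun k => ?_, Fintype.card_fin]
  rw [← map_measureReal_apply (hTm i k) measurableSet_closedBall, hlaw i hi k k.2]

lemma measureReal_withDensity_closedBall_mem_Icc (hd : IndepDesign Ω f M T N m CfL CfU C𝔪)
    (hCfL : 0 ≤ CfL) (hi : i < N) (hh : h ∈ Ioc (0:ℝ) 1) (ht : t ∈ Icc (0:ℝ) 1) :
    (volume.withDensity fun x => ENNReal.ofReal (f x)).real (closedBall t h) ∈
      Icc (CfL * h) (CfU * (2 * h)) := by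
  have := hd.isProbabilityMeasure_withDensity hi
  obtain ⟨-, -, -, -, hf, hf0, -, -, -⟩ := hd
  have hf_zero := hf 0 ⟨le_rfl, zero_le_one⟩
  have hCfU : 0 ≤ CfU := hCfL.trans (hf_zero.1.trans hf_zero.2)
  have hf_le : ∀ x, f x ≤ CfU := fun x => by
    by_cases hx : x ∈ Icc (0:ℝ) 1
    · exact (hf x hx).2
    · exact (hf0 x hx).symm ▸ hCfU
  have hh0 := hh.1
  exact ⟨(ENNReal.ofReal_le_iff_le_toReal (measure_ne_top _ _)).1 <|
      ofReal_mul_le_withDensity_closedBall hCfL (fun x hx => (hf x hx).1) ht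
        (Ioc_subset_Icc_self hh),
    ENNReal.toReal_le_of_le_ofReal (by positivity)
      (withDensity_closedBall_le_ofReal hf_le t hh0.le)⟩

lemma integral_wInd_mem_Icc (hd : IndepDesign Ω f M T N m CfL CfU C𝔪) (hCfL : 0 < CfL)
    (hC𝔪 : 0 < C𝔪) (hi : i < N) (hh : h ∈ Ioc (0:ℝ) 1) (ht : t ∈ Icc (0:ℝ) 1) :
    ∫ ω, wInd M T i t h ω ∈
      Icc (1 / 2 * min 1 (CfL / C𝔪) * min 1 (m * h)) (max 1 (2 * CfU * C𝔪) * min 1 (m * h)) := by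
  have := hd.isProbabilityMeasure_withDensity hi
  obtain ⟨hp_lower, hp_upper⟩ := hd.measureReal_withDensity_closedBall_mem_Icc hCfL.le hi hh ht
  rw [hd.integral_wInd hi]
  obtain ⟨-, -, hM, -, -, -, -, -, -⟩ := hd
  set p := (volume.withDensity fun x => ENNReal.ofReal (f x)).real (closedBall t h)
  have hp0 : 0 ≤ p := measureReal_nonneg
  have hp1 : p ≤ 1 := measureReal_le_one
  have hh0 := hh.1
  have hmh : 0 ≤ (m : ℝ) * h := by positivity
  have hKp_lower : CfL / C𝔪 * (m * h) ≤ M i * p :=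
    calc CfL / C𝔪 * (m * h) = m / C𝔪 * (CfL * h) := by ring
      _ ≤ M i * p := mul_le_mul (hM i hi).1 hp_lower (by positivity) (by positivity)
  have hKp_upper : M i * p ≤ 2 * CfU * C𝔪 * (m * h) :=
    calc M i * p ≤ C𝔪 * m * (CfU * (2 * h)) := mul_le_mul (hM i hi).2 hp_upper hp0 (by positivity)
      _ = 2 * CfU * C𝔪 * (m * h) := by ring
  constructor
  · calc 1 / 2 * min 1 (CfL / C𝔪) * min 1 (m * h) ≤ 1 / 2 * min 1 (CfL / C𝔪 * (m * h)) := by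
          rw [mul_assoc]; gcongr; exact min_one_mul_min_one_le (by positivity) hmh
      _ ≤ 1 / 2 * min 1 (M i * p) := by gcongr
      _ ≤ _ := half_min_one_mul_le_one_sub_one_sub_pow hp0 hp1 _
  · calc _ ≤ min 1 (M i * p) := one_sub_one_sub_pow_le_min_one_mul hp1 _
      _ ≤ min 1 (2 * CfU * C𝔪 * (m * h)) := by gcongr
      _ ≤ _ := min_one_mul_le_max_one_mul_min_one _ hmh

lemma integral_WNone (hd : IndepDesign Ω f M T N m CfL CfU C𝔪) :
    ∫ ω, WNone M T N t h ω = ∑ i ∈ Finset.range N, ∫ ω, wInd M T i t h ω := by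
  obtain ⟨hP, -, -, -, -, -, hTm, -, -⟩ := hd
  refine integral_finsetSum _ fun i _ => ?_
  rw [wInd_eq_indicator]
  exact (integrable_const 1).indicator
    (MeasurableSet.iUnion fun k : Fin (M i) => hTm i k measurableSet_closedBall)

end IndepDesign

theorem stmt8_general (CfL CfU C𝔪 : ℝ) (hCfL : 0 < CfL) (hC𝔪 : 1 < C𝔪) :
    ∃ blo > (0:ℝ), ∃ bhi : ℝ, blo ≤ bhi ∧
      ∀ (Ω : Type) [MeasureSpace Ω] (f : ℝ → ℝ) (M : ℕ → ℕ)
        (T : ℕ → ℕ → Ω → ℝ) (N m : ℕ),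
        1 ≤ N → 1 ≤ m → IndepDesign Ω f M T N m CfL CfU C𝔪 →
        ∀ h ∈ Ioc (0:ℝ) 1, ∀ t ∈ Icc (0:ℝ) 1,
          blo * N * min 1 (m * h) ≤ (∫ ω, WNone M T N t h ω) ∧
          (∫ ω, WNone M T N t h ω) ≤ bhi * N * min 1 (m * h) := by
  have hC𝔪0 : 0 < C𝔪 := zero_lt_one.trans hC𝔪
  refine ⟨1 / 2 * min 1 (CfL / C𝔪), by positivity, max 1 (2 * CfU * C𝔪), ?_, ?_⟩
  · calc 1 / 2 * min 1 (CfL / C𝔪) ≤ 1 / 2 * 1 := by gcongr; exact min_le_left _ _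
      _ ≤ max 1 (2 * CfU * C𝔪) := by norm_num
  intro Ω _ f M T N m _ _ hd h hh t ht
  have hbounds := fun i (hi : i ∈ Finset.range N) =>
    hd.integral_wInd_mem_Icc hCfL hC𝔪0 (Finset.mem_range.1 hi) hh ht
  rw [hd.integral_WNone]
  constructor
  · have := Finset.card_nsmul_le_sum _ _ _ fun i hi => (hbounds i hi).1
    rw [Finset.card_range, nsmul_eq_mul] at this
    linarith
  · have := Finset.sum_le_card_nsmul _ _ _ fun i hi => (hbounds i hi).2
    rw [Finset.card_range, nsmul_eq_mul] at this
    linarith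

/-- there are constants `0 < b̲ ≤ b̄`, depending only on `CfL`,
`CfU` and `C𝔪`, such that `b̲ N min(1, m h) ≤ E[𝒲_N(t;h)] ≤ b̄ N min(1, m h)`
for every design satisfying the independent-design assumptions, every `N, m ≥ 1`,
`h ∈ (0,1]` and `t ∈ [0,1]`. -/
theorem stmt8 (CfL CfU C𝔪 : ℝ) (hCfL : 0 < CfL) (hCf : CfL ≤ CfU) (hC𝔪 : 1 < C𝔪) :
    ∃ blo > (0:ℝ), ∃ bhi : ℝ, blo ≤ bhi ∧
      ∀ (Ω : Type) [MeasureSpace Ω] (f : ℝ → ℝ) (M : ℕ → ℕ)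
        (T : ℕ → ℕ → Ω → ℝ) (N m : ℕ),
        1 ≤ N → 1 ≤ m → IndepDesign Ω f M T N m CfL CfU C𝔪 →
        ∀ h ∈ Ioc (0:ℝ) 1, ∀ t ∈ Icc (0:ℝ) 1,
          blo * N * min 1 (m * h) ≤ (∫ ω, WNone M T N t h ω) ∧
          (∫ ω, WNone M T N t h ω) ≤ bhi * N * min 1 (m * h) :=
  stmt8_general CfL CfU C𝔪 hCfL hC𝔪
end
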